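/- arXiv:1506.06830 — 4 statements merged into one kernel-verified Lean document; each statement's English description precedes it below -/
import Mathlib

section
/- Let p be an odd prime and m a positive integer. For any nonzero element c of F_{p^m} and any y in F_p^*, the sum over all x in F_{p^m}^* of ω^{Tr(y·c·x^{p^{m/2}+1})} equals -1 - p^{m/2}, where m is even, c + c^{p^{m/2}} ≠ 0, ω is a primitive p-th root of unity, and Tr is the trace from F_{p^m} to F_p. -/
/-!
Write `q = p ^ (m / 2)`, so that `F = 𝔽_{q²}`, and `a = y c`. On `Fˣ` the map `x ↦ x ^ (q + 1)` is
the norm onto `𝔽_qˣ = {u | u ^ (q - 1) = 1}`; as `Fˣ` is cyclic of order `(q + 1)(q - 1)`, each of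
its fibres has `q + 1` elements, so the sum is `(q + 1) ∑_{u ∈ 𝔽_qˣ} ω ^ Tr (a u)`. For `u ∈ 𝔽_q`,
`Tr (a u)` only depends on `(a + a ^ q) u`, and `a + a ^ q = y (c + c ^ q) ≠ 0`, so
`u ↦ ω ^ Tr (a u)` is a nontrivial additive character of `𝔽_q`. Its sum over `𝔽_q` vanishes, hence
the sum over `𝔽_qˣ` is `-1` and the total is `-(q + 1)`.
-/

open Finset Polynomial

theorem MonoidHom.sum_comp_eq_card_ker_nsmul {G H M : Type*} [Group G] [Fintype G] [Group H]
    [DecidableEq H] [AddCommMonoid M] (φ : G →* H) {s : Finset H} (hs : ∀ h, h ∈ s ↔ h ∈ φ.range)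
    (f : H → M) : ∑ g, f (φ g) = Nat.card φ.ker • ∑ h ∈ s, f h := by
  have himage : univ.image φ = s := by ext h; simp [hs, MonoidHom.mem_range]
  rw [Finset.sum_comp, himage, smul_sum]
  refine sum_congr rfl fun h hh => ?_
  obtain ⟨g, rfl⟩ := (hs h).1 hh
  rw [card_fiber_eq_of_mem_range φ ⟨g, rfl⟩ ⟨1, map_one φ⟩, ← Fintype.card_subtype,
    ← Nat.card_eq_fintype_card]
  rfl

theorem Finset.sum_units_filter_val_mem {G₀ M : Type*} [GroupWithZero G₀] [DecidableEq G₀]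
    [Fintype G₀ˣ] [AddCommMonoid M] {s : Finset G₀} (hs : (0 : G₀) ∉ s) (f : G₀ → M) :
    ∑ u ∈ univ.filter (fun u : G₀ˣ => (u : G₀) ∈ s), f u = ∑ x ∈ s, f x :=
  sum_nbij (↑) (fun u hu => (mem_filter.1 hu).2) (fun _ _ _ _ h => Units.ext h)
    (fun x hx => ⟨Units.mk0 x (ne_of_mem_of_not_mem hx hs), by simpa using hx, rfl⟩)
    fun _ _ => rfl

theorem AddChar.sum_filter_mem_eq_zero {G R : Type*} [AddGroup G] [Fintype G] [CommRing R]
    [IsDomain R] (ψ : AddChar G R) (H : AddSubgroup G) [DecidablePred (· ∈ H)] {h : G}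
    (hH : h ∈ H) (hψ : ψ h ≠ 1) : ∑ g ∈ univ.filter (· ∈ H), ψ g = 0 := by
  rw [sum_subtype (p := (· ∈ H)) _ (fun g => by simp) ψ]
  exact sum_eq_zero_of_ne_one (ψ := ψ.compAddMonoidHom H.subtype) (ne_one_iff.2 ⟨⟨h, hH⟩, hψ⟩)

theorem filter_pow_eq_self_eq_insert_nthRootsFinset {R : Type*} [CommRing R] [IsDomain R]
    [Fintype R] [DecidableEq R] {q : ℕ} (hq : 1 < q) :
    univ.filter (fun u : R => u ^ q = u) = insert 0 (nthRootsFinset (q - 1) (1 : R)) := by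
  ext u
  rcases eq_or_ne u 0 with rfl | hu
  · simp [zero_pow (by omega : q ≠ 0)]
  · have hpow : u ^ q = u ^ (q - 1) * u := by rw [← pow_succ, Nat.sub_add_cancel hq.le]
    simp [hu, hpow, mem_nthRootsFinset (by omega : 0 < q - 1)]

namespace FiniteField

section QuadraticExtension

variable {F : Type*} [Field F] [Fintype F] {q : ℕ}

theorem one_lt_of_card_eq_sq (hF : Fintype.card F = q ^ 2) : 1 < q :=
  (Nat.one_lt_pow_iff two_ne_zero).1 (hF ▸ Fintype.one_lt_card)

theorem nat_card_units_of_card_eq_sq (hF : Fintype.card F = q ^ 2) :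
    Nat.card Fˣ = (q + 1) * (q - 1) := by
  rw [Nat.card_units, Nat.card_eq_fintype_card, hF, ← Nat.sq_sub_sq, one_pow]

theorem card_ker_powMonoidHom_add_one (hF : Fintype.card F = q ^ 2) :
    Nat.card (powMonoidHom (q + 1) : Fˣ →* Fˣ).ker = q + 1 := by
  rw [IsCyclic.card_powMonoidHom_ker, nat_card_units_of_card_eq_sq hF]
  exact Nat.gcd_eq_right (dvd_mul_right _ _)

theorem range_powMonoidHom_add_one (hF : Fintype.card F = q ^ 2) :
    (powMonoidHom (q + 1) : Fˣ →* Fˣ).range = rootsOfUnity (q - 1) F := by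
  have : NeZero (q - 1) := ⟨by have := one_lt_of_card_eq_sq hF; omega⟩
  refine Subgroup.eq_of_le_of_card_ge ?_ ?_
  · rintro _ ⟨x, rfl⟩
    rw [mem_rootsOfUnity, powMonoidHom_apply, ← pow_mul, ← nat_card_units_of_card_eq_sq hF]
    exact pow_card_eq_one'
  · rw [IsCyclic.card_powMonoidHom_range, nat_card_units_of_card_eq_sq hF,
      Nat.gcd_eq_right (dvd_mul_right _ _), Nat.mul_div_cancel_left _ (Nat.succ_pos q)]
    exact card_rootsOfUnity _ _

theorem sum_ne_zero_pow_add_one [DecidableEq F] {M : Type*} [AddCommMonoid M]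
    (hF : Fintype.card F = q ^ 2) (f : F → M) :
    ∑ x ∈ univ.filter (fun x : F => x ≠ 0), f (x ^ (q + 1)) =
      (q + 1) • ∑ u ∈ nthRootsFinset (q - 1) (1 : F), f u := by
  have hq : 0 < q - 1 := by have := one_lt_of_card_eq_sq hF; omega
  have hunits : univ.filter (fun u : Fˣ => (u : F) ∈ univ.filter (fun x : F => x ≠ 0)) = univ :=
    filter_true_of_mem fun u _ => by simp
  calc ∑ x ∈ univ.filter (fun x : F => x ≠ 0), f (x ^ (q + 1))
      = ∑ u : Fˣ, f ↑(powMonoidHom (q + 1) u) := by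
        rw [← sum_units_filter_val_mem (by simp), hunits]
        simp
    _ = Nat.card (powMonoidHom (q + 1) : Fˣ →* Fˣ).ker •
          ∑ u ∈ univ.filter (fun u : Fˣ => (u : F) ∈ nthRootsFinset (q - 1) (1 : F)), f u := by
        refine (powMonoidHom (q + 1)).sum_comp_eq_card_ker_nsmul (fun u => ?_) (fun u : Fˣ => f u)
        simp [range_powMonoidHom_add_one hF, mem_nthRootsFinset hq, Units.ext_iff]
    _ = _ := by
        rw [card_ker_powMonoidHom_add_one hF,
          sum_units_filter_val_mem (fun h => ne_zero_of_mem_nthRootsFinset one_ne_zero h rfl)]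

end QuadraticExtension

section Trace

variable {p n : ℕ} [Fact p.Prime] {F : Type*} [Field F] [Fintype F] [Algebra (ZMod p) F]
  [CharP F p]

theorem algebraMap_trace_eq_sum_add_pow (hF : Fintype.card F = p ^ (n + n)) (z : F) :
    algebraMap (ZMod p) F (Algebra.trace (ZMod p) F z) =
      ∑ i ∈ range n, (z + z ^ p ^ n) ^ p ^ i := by
  have hrank : Module.finrank (ZMod p) F = n + n := by
    rw [Module.card_eq_pow_finrank (K := ZMod p), ZMod.card] at hF
    exact Nat.pow_right_injective (Fact.out : p.Prime).two_le hF
  rw [algebraMap_trace_eq_sum_pow, hrank, Nat.card_zmod, sum_range_add, ← sum_add_distrib]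
  refine sum_congr rfl fun i _ => ?_
  rw [add_pow_char_pow, ← pow_mul, ← pow_add]

theorem exists_pow_eq_self_trace_mul_ne_zero (hF : Fintype.card F = p ^ (n + n)) {a : F}
    (ha : a + a ^ p ^ n ≠ 0) : ∃ u : F, u ^ p ^ n = u ∧ Algebra.trace (ZMod p) F (a * u) ≠ 0 := by
  have hfrob : ∀ z : F, (z ^ p ^ n) ^ p ^ n = z := fun z => by
    rw [← pow_mul, ← pow_add, ← hF, FiniteField.pow_card]
  obtain ⟨z, hz⟩ := Algebra.trace_surjective (ZMod p) F 1
  set b := a + a ^ p ^ n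
  have hb : b ^ p ^ n = b := by rw [add_pow_char_pow, hfrob, add_comm]
  set u := (z + z ^ p ^ n) / b
  have hu : u ^ p ^ n = u := by rw [div_pow, add_pow_char_pow, hfrob, add_comm (z ^ _), hb]
  have htr : Algebra.trace (ZMod p) F (a * u) = Algebra.trace (ZMod p) F z := by
    apply (algebraMap (ZMod p) F).injective
    rw [algebraMap_trace_eq_sum_add_pow hF, algebraMap_trace_eq_sum_add_pow hF, mul_pow, hu,
      ← add_mul, mul_div_cancel₀ _ ha]
  exact ⟨u, hu, htr ▸ hz ▸ one_ne_zero⟩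

theorem sum_pow_eq_self_pow_trace_eq_zero [DecidableEq F] {R : Type*} [CommRing R] [IsDomain R]
    (hF : Fintype.card F = p ^ (n + n)) {a : F} (ha : a + a ^ p ^ n ≠ 0) {ω : R}
    (hω : IsPrimitiveRoot ω p) :
    ∑ u ∈ univ.filter (fun u : F => u ^ p ^ n = u),
      ω ^ (Algebra.trace (ZMod p) F (a * u)).val = 0 := by
  obtain ⟨u₀, hu₀, htr⟩ := exists_pow_eq_self_trace_mul_ne_zero hF ha
  let ψ : AddChar F R := (AddChar.zmodChar p hω.pow_eq_one).compAddMonoidHom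
    ((Algebra.trace (ZMod p) F).toAddMonoidHom.comp (AddMonoidHom.mulLeft a))
  let K := ((iterateFrobenius F p n).eqLocusField (RingHom.id F)).toAddSubgroup
  have hK : ∀ u, u ∈ K ↔ u ^ p ^ n = u := fun u => by
    simp [K, RingHom.mem_eqLocusField, iterateFrobenius_def]
  classical
  rw [filter_congr fun u _ => (hK u).symm]
  exact ψ.sum_filter_mem_eq_zero K ((hK u₀).2 hu₀)
    (hω.pow_ne_one_of_pos_of_lt ((ZMod.val_ne_zero _).2 htr) (ZMod.val_lt _))

end Trace

end FiniteField

theorem stmt_0_general (p m : ℕ) (hp : p.Prime) (hme : Even m)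
    (F : Type) [Field F] [Fintype F] [DecidableEq F] [Algebra (ZMod p) F]
    (hF : Fintype.card F = p ^ m)
    (c : F) (hcc : c + c ^ (p ^ (m / 2)) ≠ 0)
    (y : ZMod p) (hy : y ≠ 0) :
    ∑ x ∈ Finset.univ.filter (fun x : F => x ≠ 0),
        Complex.exp (2 * (Real.pi : ℂ) * Complex.I / (p : ℂ)) ^
          (Algebra.trace (ZMod p) F
            (algebraMap (ZMod p) F y * c * x ^ (p ^ (m / 2) + 1))).val
      = -1 - (p : ℂ) ^ (m / 2) := by
  have : Fact p.Prime := ⟨hp⟩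
  have : CharP F p := charP_of_injective_algebraMap (algebraMap (ZMod p) F).injective p
  obtain ⟨n, rfl⟩ := hme
  rw [show (n + n) / 2 = n by omega] at hcc ⊢
  have hcard : Fintype.card F = (p ^ n) ^ 2 := by rw [hF]; ring
  set ω := Complex.exp (2 * (Real.pi : ℂ) * Complex.I / (p : ℂ))
  set a := algebraMap (ZMod p) F y * c
  have ha : a + a ^ p ^ n ≠ 0 := by
    rw [mul_pow, ← map_pow, ZMod.pow_card_pow, ← mul_add]
    exact mul_ne_zero ((_root_.map_ne_zero _).2 hy) hcc
  have hsubfield := FiniteField.sum_pow_eq_self_pow_trace_eq_zero hF ha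
    (Complex.isPrimitiveRoot_exp p hp.ne_zero)
  rw [filter_pow_eq_self_eq_insert_nthRootsFinset (FiniteField.one_lt_of_card_eq_sq hcard),
    sum_insert (fun h => ne_zero_of_mem_nthRootsFinset one_ne_zero h rfl), mul_zero, map_zero,
    ZMod.val_zero, pow_zero] at hsubfield
  rw [FiniteField.sum_ne_zero_pow_add_one hcard fun u => ω ^ (Algebra.trace (ZMod p) F (a * u)).val,
    eq_neg_of_add_eq_zero_right hsubfield, nsmul_eq_mul]
  push_cast
  ring

theorem stmt_0 (p m : ℕ) (hp : p.Prime) (hp2 : p ≠ 2) (hm : 0 < m) (hme : Even m)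
    (F : Type) [Field F] [Fintype F] [DecidableEq F] [Algebra (ZMod p) F]
    (hF : Fintype.card F = p ^ m)
    (c : F) (hc : c ≠ 0) (hcc : c + c ^ (p ^ (m / 2)) ≠ 0)
    (y : ZMod p) (hy : y ≠ 0) :
    ∑ x ∈ Finset.univ.filter (fun x : F => x ≠ 0),
        Complex.exp (2 * (Real.pi : ℂ) * Complex.I / (p : ℂ)) ^
          (Algebra.trace (ZMod p) F
            (algebraMap (ZMod p) F y * c * x ^ (p ^ (m / 2) + 1))).val
      = -1 - (p : ℂ) ^ (m / 2) :=
  stmt_0_general p m hp hme F hF c hcc y hy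
end

section
/- Let p be an odd prime and m an even positive integer. If c ∈ F_{p^m} satisfies c + c^{p^{m/2}} ≠ 0, then the number of x ∈ F_{p^m}^* with Tr(c·x^{p^{m/2}+1}) = 0 equals p^{m-1} - (p-1)p^{(m-2)/2} - 1. -/
/-!
Put `q = p ^ (m / 2)` and let `K ⊆ F` be the subfield with `q` elements, so `[F : K] = 2`. Then
`x ^ (q + 1)` is the norm `N x ∈ K`, and by transitivity of the trace
`Tr (c * N x) = Tr_{K/𝔽_p} (d * N x)` with `d = Tr_{F/K} c = c + c ^ q ≠ 0`. The norm `Fˣ → Kˣ` is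
surjective, so all its fibres have `q + 1` elements, and `t ↦ d * t` permutes `Kˣ`; hence the count
is `(q + 1) * (#ker Tr_{K/𝔽_p} - 1) = (q + 1) * (q / p - 1)`.
-/

open Finset

@[to_additive]
theorem MonoidHom.card_filter_comp_of_surjective {G H : Type*} [Group G] [Fintype G] [Group H]
    [Fintype H] [DecidableEq H] {f : G →* H} (hf : Function.Surjective f) (P : H → Prop)
    [DecidablePred P] : #{g | P (f g)} = #{h | P h} * #{g | f g = 1} := calc
  #{g | P (f g)} = ∑ h with P h, #{g | f g = h} := by
    rw [card_eq_sum_card_fiberwise (f := f) (t := {h | P h}) fun g hg => by simpa using hg]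
    refine sum_congr rfl fun h hh => ?_
    rw [filter_filter]
    refine congrArg card (filter_congr fun g _ => ?_)
    simp only [mem_filter, mem_univ, true_and] at hh
    exact and_iff_right_of_imp fun hg => hg ▸ hh
  _ = ∑ h with P h, #{g | f g = 1} :=
    sum_congr rfl fun h _ => card_fiber_eq_of_mem_range f (hf h) ⟨1, map_one f⟩
  _ = #{h | P h} * #{g | f g = 1} := by rw [sum_const, smul_eq_mul]

theorem card_filter_ne_zero_and_eq_card_filter_units {M₀ : Type*} [GroupWithZero M₀] [Fintype M₀]
    [DecidableEq M₀] [Fintype M₀ˣ] (P : M₀ → Prop) [DecidablePred P] :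
    #{x : M₀ | x ≠ 0 ∧ P x} = #{u : M₀ˣ | P u} := by
  refine (card_bij (fun (u : M₀ˣ) _ => (u : M₀)) (fun u hu => ?_)
    (fun u _ v _ h => Units.val_injective h) fun x hx => ?_).symm
  · simp_all
  · simp only [mem_filter, mem_univ, true_and] at hx
    exact ⟨Units.mk0 x hx.1, by simpa using hx.2, rfl⟩

namespace FiniteField

variable {K L : Type*} [Field K] [Fintype K] [DecidableEq K] [Field L] [Fintype L] [Algebra K L]

theorem card_filter_trace_eq_zero :
    #{x : L | Algebra.trace K L x = 0} = Fintype.card L / Fintype.card K := by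
  have h := AddMonoidHom.card_filter_comp_of_surjective
    (f := (Algebra.trace K L).toAddMonoidHom) (Algebra.trace_surjective K L) fun _ => True
  simp only [filter_true, card_univ] at h
  rw [h, Nat.mul_div_cancel_left _ Fintype.card_pos]
  rfl

theorem card_filter_ne_zero_and_norm [DecidableEq L] (P : K → Prop) [DecidablePred P] :
    #{x : L | x ≠ 0 ∧ P (Algebra.norm K x)} =
      #{t : K | t ≠ 0 ∧ P t} * ((Fintype.card L - 1) / (Fintype.card K - 1)) := by
  have hN := unitsMap_norm_surjective K L
  have hfiber := MonoidHom.card_filter_comp_of_surjective hN fun _ => True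
  simp only [filter_true, card_univ, Fintype.card_units] at hfiber
  rw [card_filter_ne_zero_and_eq_card_filter_units, card_filter_ne_zero_and_eq_card_filter_units,
    hfiber, Nat.mul_div_cancel_left _ (Nat.sub_pos_of_lt Fintype.one_lt_card)]
  exact MonoidHom.card_filter_comp_of_surjective hN fun u => P u

theorem card_filter_trace_mul_pow_eq_zero {k : Type*} [Field k] [Fintype k] [DecidableEq k]
    [DecidableEq L] [Algebra k K] [Algebra k L] [IsScalarTower k K L]
    (hKL : Module.finrank K L = 2) {c : L} (hc : c + c ^ Fintype.card K ≠ 0) :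
    #{x : L | x ≠ 0 ∧ Algebra.trace k L (c * x ^ (Fintype.card K + 1)) = 0} =
      (Fintype.card K + 1) * (Fintype.card K / Fintype.card k - 1) := by
  set q := Fintype.card K
  have hnorm (x : L) : x ^ (q + 1) = algebraMap K L (Algebra.norm K x) := by
    rw [algebraMap_norm_eq_prod_pow, hKL, prod_range_succ, prod_range_one,
      Nat.card_eq_fintype_card, pow_zero, pow_one, pow_one, pow_succ', mul_comm]
  set d := Algebra.trace K L c
  have hd : algebraMap K L d = c + c ^ q := by
    rw [algebraMap_trace_eq_sum_pow, hKL, sum_range_succ, sum_range_one,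
      Nat.card_eq_fintype_card, pow_zero, pow_one, pow_one]
  have hd0 : d ≠ 0 := fun h => hc (by rw [← hd, h, map_zero])
  have htrace (t : K) : Algebra.trace k L (c * algebraMap K L t) = Algebra.trace k K (d * t) := by
    rw [← Algebra.trace_trace (S := K), mul_comm, ← Algebra.smul_def, map_smul, smul_eq_mul,
      mul_comm]
  have hfiber : (Fintype.card L - 1) / (q - 1) = q + 1 := by
    rw [Module.card_eq_pow_finrank (K := K), hKL, ← one_pow 2, Nat.sq_sub_sq, one_pow,
      Nat.mul_div_cancel _ (Nat.sub_pos_of_lt Fintype.one_lt_card)]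
  have herase : ({t : K | t ≠ 0 ∧ Algebra.trace k K t = 0} : Finset K) =
      ({t : K | Algebra.trace k K t = 0} : Finset K).erase 0 := by
    ext t
    simp
  calc #{x : L | x ≠ 0 ∧ Algebra.trace k L (c * x ^ (q + 1)) = 0}
      = #{x : L | x ≠ 0 ∧ Algebra.trace k K (d * Algebra.norm K x) = 0} := by
        simp_rw [hnorm, htrace]
    _ = #{t : K | t ≠ 0 ∧ Algebra.trace k K (d * t) = 0} * (q + 1) := by
        rw [card_filter_ne_zero_and_norm fun t => Algebra.trace k K (d * t) = 0, hfiber]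
    _ = #{t : K | t ≠ 0 ∧ Algebra.trace k K t = 0} * (q + 1) := by
        congr 1
        exact card_equiv (Equiv.mulLeft₀ d hd0) (by simp [hd0])
    _ = (q + 1) * (q / Fintype.card k - 1) := by
        rw [herase, card_erase_of_mem (by simp), card_filter_trace_eq_zero, mul_comm]

end FiniteField

theorem stmt_1_general (p m : ℕ) (hp : p.Prime) (hme : Even m)
    (F : Type) [Field F] [Fintype F] [DecidableEq F] [Algebra (ZMod p) F]
    (hF : Fintype.card F = p ^ m)
    (c : F) (hcc : c + c ^ (p ^ (m / 2)) ≠ 0) :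
    ((Finset.univ.filter (fun x : F => x ≠ 0 ∧
        Algebra.trace (ZMod p) F (c * x ^ (p ^ (m / 2) + 1)) = 0)).card : ℤ)
      = (p : ℤ) ^ (m - 1) - ((p : ℤ) - 1) * (p : ℤ) ^ ((m - 2) / 2) - 1 := by
  have := Fact.mk hp
  obtain ⟨n, rfl⟩ := hme
  have hfinrank : Module.finrank (ZMod p) F = n + n := by
    rw [← FiniteField.pow_finrank_eq_card p F] at hF
    exact Nat.pow_right_injective hp.two_le hF
  have hn : n ≠ 0 := by
    have : 0 < Module.finrank (ZMod p) F := Module.finrank_pos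
    omega
  let K := GaloisField p n
  let : Fintype K := Fintype.ofFinite K
  classical
  have hK : Fintype.card K = p ^ n := by
    rw [Fintype.card_eq_nat_card, GaloisField.card p n hn]
  obtain ⟨f⟩ := FiniteField.nonempty_algHom_of_finrank_dvd (F := ZMod p) (K := K) (L := F)
    (by rw [GaloisField.finrank p hn, hfinrank]; exact Dvd.intro_left 2 (two_mul n))
  algebraize [f.toRingHom]
  have hKF : Module.finrank K F = 2 := by
    have := Module.finrank_mul_finrank (ZMod p) K F
    rw [GaloisField.finrank p hn, hfinrank, ← two_mul, mul_comm 2] at this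
    exact Nat.eq_of_mul_eq_mul_left (Nat.pos_of_ne_zero hn) this
  have hn2 : (n + n) / 2 = n := by omega
  have hcount := FiniteField.card_filter_trace_mul_pow_eq_zero (k := ZMod p) hKF
    (c := c) (by rwa [hK, ← hn2])
  rw [hK, ZMod.card] at hcount
  rw [hn2, hcount]
  obtain ⟨j, rfl⟩ := Nat.exists_eq_add_one_of_ne_zero hn
  rw [pow_succ, Nat.mul_div_cancel _ hp.pos, show j + 1 + (j + 1) - 1 = 2 * j + 1 by omega,
    show (j + 1 + (j + 1) - 2) / 2 = j by omega]
  push_cast [Nat.one_le_pow _ _ hp.pos]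
  ring

theorem stmt_1 (p m : ℕ) (hp : p.Prime) (hp2 : p ≠ 2) (hm : 0 < m) (hme : Even m)
    (F : Type) [Field F] [Fintype F] [DecidableEq F] [Algebra (ZMod p) F]
    (hF : Fintype.card F = p ^ m)
    (c : F) (hcc : c + c ^ (p ^ (m / 2)) ≠ 0) :
    ((Finset.univ.filter (fun x : F => x ≠ 0 ∧
        Algebra.trace (ZMod p) F (c * x ^ (p ^ (m / 2) + 1)) = 0)).card : ℤ)
      = (p : ℤ) ^ (m - 1) - ((p : ℤ) - 1) * (p : ℤ) ^ ((m - 2) / 2) - 1 :=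
  stmt_1_general p m hp hme F hF c hcc
end

section
/- Let p be an odd prime, m and k positive integers with m/gcd(m,k) odd, and c ∈ F_{p^m}^*. Then the number of x ∈ F_{p^m}^* with Tr(c·x^{p^k+1}) = 0 equals the number of x ∈ F_{p^m}^* with Tr(c·x^2) = 0. -/
/-!
Both counts are instances of `#{x ∈ G | P (x ^ n)}` for the group `G = F_{p^m}^*` of order
`N = p^m - 1`. Such a count depends on `n` only through `gcd(n, N)`: if `gcd(a, N) = gcd(b, N)` then
`a ≡ w b (mod N)` for some `w` prime to `N`, and `x ↦ x ^ w` is a bijection of `G`. Finally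
`gcd(p^k + 1, p^m - 1) = 2 = gcd(2, p^m - 1)` because `m / gcd(m, k)` is odd.
-/

open Finset

theorem Nat.gcd_two_mul_eq_gcd_of_odd_div_gcd {m k : ℕ} (hodd : Odd (m / m.gcd k)) :
    (2 * k).gcd m = m.gcd k := by
  have hd : 0 < m.gcd k :=
    Nat.gcd_pos_of_pos_left _ (Nat.pos_of_ne_zero (by rintro rfl; simp at hodd))
  obtain ⟨m', k', hcop, hm, hk⟩ := Nat.exists_coprime m k
  generalize m.gcd k = d at *
  subst hm hk
  rw [Nat.mul_div_cancel _ hd] at hodd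
  rw [← mul_assoc, Nat.gcd_mul_right,
    ((Nat.coprime_two_left.2 hodd).mul_left hcop.symm).gcd_eq_one, one_mul]

theorem Nat.gcd_pow_add_one_pow_sub_one {q m k : ℕ} (hq : Odd q) (hodd : Odd (m / m.gcd k)) :
    (q ^ k + 1).gcd (q ^ m - 1) = 2 := by
  set g := (q ^ k + 1).gcd (q ^ m - 1)
  have hg_sq : g ∣ q ^ (2 * k) - 1 := by
    rw [pow_mul', ← one_pow 2, Nat.sq_sub_sq]
    exact (Nat.gcd_dvd_left _ _).mul_right _
  have hg_sub : g ∣ q ^ k - 1 :=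
    calc g ∣ (q ^ (2 * k) - 1).gcd (q ^ m - 1) := Nat.dvd_gcd hg_sq (Nat.gcd_dvd_right _ _)
      _ = (q ^ m - 1).gcd (q ^ k - 1) := by
        rw [Nat.pow_sub_one_gcd_pow_sub_one, Nat.pow_sub_one_gcd_pow_sub_one,
          Nat.gcd_two_mul_eq_gcd_of_odd_div_gcd hodd]
      _ ∣ q ^ k - 1 := Nat.gcd_dvd_right _ _
  have hg_two : g ∣ 2 := by
    have hq1 : 1 ≤ q ^ k := Nat.one_le_pow _ _ hq.pos
    simpa [show q ^ k + 1 - (q ^ k - 1) = 2 by omega] using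
      Nat.dvd_sub (Nat.gcd_dvd_left _ _) hg_sub
  have two_dvd_g : 2 ∣ g :=
    Nat.dvd_gcd hq.pow.add_one.two_dvd (Nat.Odd.sub_odd hq.pow odd_one).two_dvd
  exact Nat.dvd_antisymm hg_two two_dvd_g

theorem Nat.exists_coprime_modEq_mul_of_gcd_eq {a b N : ℕ} (hN : N ≠ 0)
    (h : a.gcd N = b.gcd N) : ∃ w, w.Coprime N ∧ a ≡ w * b [MOD N] := by
  have : NeZero N := ⟨hN⟩
  set d := a.gcd N
  have hd : 0 < d := Nat.gcd_pos_of_pos_right _ (Nat.pos_of_ne_zero hN)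
  have hdN : N / d ∣ N := Nat.div_dvd_of_dvd (Nat.gcd_dvd_right a N)
  have ha : (a / d).Coprime (N / d) := Nat.coprime_div_gcd_div_gcd hd
  have hb : (b / d).Coprime (N / d) := h ▸ Nat.coprime_div_gcd_div_gcd (h ▸ hd)
  -- `w` is a lift to `(ZMod N)ˣ` of the unit `(a / d) / (b / d)` of `ZMod (N / d)`.
  obtain ⟨u, hu⟩ := ZMod.unitsMap_surjective hdN
    (ZMod.unitOfCoprime _ ha * (ZMod.unitOfCoprime _ hb)⁻¹)
  refine ⟨(u : ZMod N).val, ZMod.val_coe_unit_coprime u, ?_⟩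
  have hw : a / d ≡ (u : ZMod N).val * (b / d) [MOD N / d] := by
    rw [← ZMod.natCast_eq_natCast_iff, Nat.cast_mul, ← ZMod.cast_eq_val,
      ← ZMod.unitsMap_val hdN, hu, Units.val_mul, mul_assoc, ← ZMod.coe_unitOfCoprime _ hb,
      Units.inv_mul, mul_one, ZMod.coe_unitOfCoprime]
  have := hw.mul_left' d
  rwa [Nat.mul_div_cancel' (Nat.gcd_dvd_right a N), Nat.mul_div_cancel' (Nat.gcd_dvd_left a N),
    mul_left_comm, Nat.mul_div_cancel' (h ▸ Nat.gcd_dvd_left b N)] at this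

theorem card_filter_pow_eq_of_gcd_eq {G : Type*} [Group G] [Fintype G] (P : G → Prop)
    [DecidablePred P] {a b : ℕ} (h : a.gcd (Nat.card G) = b.gcd (Nat.card G)) :
    #{x | P (x ^ a)} = #{x | P (x ^ b)} := by
  obtain ⟨w, hw, hab⟩ := Nat.exists_coprime_modEq_mul_of_gcd_eq Nat.card_pos.ne' h
  refine card_equiv (powCoprime hw.symm) fun x => ?_
  rw [powCoprime_apply, mem_filter_univ, mem_filter_univ, ← pow_mul,
    ← pow_mod_natCard x (w * b), ← hab, pow_mod_natCard]

theorem card_filter_ne_zero_eq_card_filter_units {G₀ : Type*} [GroupWithZero G₀] [Fintype G₀]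
    [DecidableEq G₀] (P : G₀ → Prop) [DecidablePred P] :
    #{x | x ≠ 0 ∧ P x} = #{u : G₀ˣ | P u} := by
  symm
  refine card_nbij' (↑) (fun x => if h : x = 0 then 1 else Units.mk0 x h) ?_ ?_ ?_ ?_ <;>
    intro x <;> simp +contextual

theorem stmt_4_general (p m k : ℕ) (hp : p.Prime) (hp2 : p ≠ 2)
    (hodd : Odd (m / Nat.gcd m k))
    (F : Type) [Field F] [Fintype F] [DecidableEq F] [Algebra (ZMod p) F]
    (hF : Fintype.card F = p ^ m)
    (c : F) :
    (Finset.univ.filter (fun x : F => x ≠ 0 ∧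
        Algebra.trace (ZMod p) F (c * x ^ (p ^ k + 1)) = 0)).card
      = (Finset.univ.filter (fun x : F => x ≠ 0 ∧
        Algebra.trace (ZMod p) F (c * x ^ 2) = 0)).card := by
  have hp_odd : Odd p := hp.odd_of_ne_two hp2
  have hcard : Nat.card Fˣ = p ^ m - 1 := by
    rw [Nat.card_eq_fintype_card, Fintype.card_units, hF]
  rw [card_filter_ne_zero_eq_card_filter_units, card_filter_ne_zero_eq_card_filter_units]
  simp only [← Units.val_pow_eq_pow_val]
  refine card_filter_pow_eq_of_gcd_eq (fun u : Fˣ => Algebra.trace (ZMod p) F (c * u) = 0) ?_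
  rw [hcard, Nat.gcd_pow_add_one_pow_sub_one hp_odd hodd,
    Nat.gcd_eq_left (Nat.Odd.sub_odd hp_odd.pow odd_one).two_dvd]

theorem stmt_4 (p m k : ℕ) (hp : p.Prime) (hp2 : p ≠ 2) (hm : 0 < m) (hk : 0 < k)
    (hodd : Odd (m / Nat.gcd m k))
    (F : Type) [Field F] [Fintype F] [DecidableEq F] [Algebra (ZMod p) F]
    (hF : Fintype.card F = p ^ m)
    (c : F) (hc : c ≠ 0) :
    (Finset.univ.filter (fun x : F => x ≠ 0 ∧
        Algebra.trace (ZMod p) F (c * x ^ (p ^ k + 1)) = 0)).card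
      = (Finset.univ.filter (fun x : F => x ≠ 0 ∧
        Algebra.trace (ZMod p) F (c * x ^ 2) = 0)).card :=
  stmt_4_general p m k hp hp2 hodd F hF c
end

section
/- Let p be an odd prime, m even, and Q : F_{p^m} → F_p a quadratic Bent function. Then there exists ε ∈ {1,-1} such that |{x ∈ F_{p^m}^* : Q(x) = 0}| = p^{m-1} + ε(p-1)p^{(m-2)/2} - 1. -/
/-!
Diagonalise `Q` as `∑ wᵢ xᵢ²` over `K = 𝔽_q` and count its zeros with a primitive additive
character `ψ : K → ℂ`: `q · N = ∑_a ∑_x ψ (a Q(x))`. The term `a = 0` is `q ^ n`. For `a ≠ 0` the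
inner sum factors into quadratic Gauss sums `∑_y ψ (a wᵢ y²) = χ(a wᵢ) g`, and as `n = 2k` is even,
`χ(a) ^ n = 1` and `g ^ n = (χ(-1) q) ^ k`, so every such term equals `χ((-1) ^ k ∏ wᵢ) q ^ k`.
-/

open Finset AddChar Module

lemma AddChar.map_sum_eq_prod {A M ι : Type*} [AddCommMonoid A] [CommMonoid M]
    (ψ : AddChar A M) (s : Finset ι) (f : ι → A) :
    ψ (∑ i ∈ s, f i) = ∏ i ∈ s, ψ (f i) := by
  classical
  induction s using Finset.induction_on with
  | empty => simp
  | insert _ _ h ih => rw [sum_insert h, prod_insert h, ψ.map_add_eq_mul, ih]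

section GaussSum

variable {K : Type*} [Field K] [Fintype K] [DecidableEq K]

variable (K) in
noncomputable def complexQuadraticChar : MulChar K ℂ :=
  (quadraticChar K).ringHomComp (Int.castRingHom ℂ)

local notation "χ" => complexQuadraticChar K

lemma complexQuadraticChar_apply (a : K) : χ a = quadraticChar K a := rfl

lemma complexQuadraticChar_sq {a : K} (ha : a ≠ 0) : χ a ^ 2 = 1 := by
  rw [← map_pow, complexQuadraticChar_apply, quadraticChar_sq_one' ha, Int.cast_one]

lemma gaussSum_complexQuadraticChar_sq (hK : ringChar K ≠ 2) {ψ : AddChar K ℂ}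
    (hψ : ψ.IsPrimitive) : gaussSum χ ψ ^ 2 = χ (-1) * Fintype.card K :=
  gaussSum_sq ((MulChar.ringHomComp_ne_one_iff Int.cast_injective).mpr (quadraticChar_ne_one hK))
    ((quadraticChar_isQuadratic K).comp _) hψ

theorem sum_addChar_mul_sq (hK : ringChar K ≠ 2) {ψ : AddChar K ℂ} (hψ : ψ.IsPrimitive)
    {c : K} (hc : c ≠ 0) : ∑ x : K, ψ (c * x ^ 2) = χ c * gaussSum χ ψ := by
  have hcard (a : K) : (#{x | x ^ 2 = a} : ℂ) = χ a + 1 := by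
    rw [complexQuadraticChar_apply, ← Set.toFinset_ofPred]
    exact_mod_cast quadraticChar_card_sqrts hK a
  have hshift := gaussSum_mulShift χ ψ (Units.mk0 c hc)
  rw [Units.val_mk0] at hshift
  calc ∑ x : K, ψ (c * x ^ 2)
      = ∑ a : K, (χ a + 1) * ψ (c * a) := by
        rw [← sum_fiberwise' univ (· ^ 2) (fun a => ψ (c * a))]
        simp only [sum_const, nsmul_eq_mul, hcard]
    _ = gaussSum χ (ψ.mulShift c) + ∑ a : K, ψ (a * c) := by
        simp only [add_mul, one_mul, sum_add_distrib, gaussSum, mulShift_apply, mul_comm c]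
    _ = χ c * gaussSum χ ψ := by
        rw [sum_mulShift c hψ, if_neg hc, Nat.cast_zero, add_zero, ← hshift, ← mul_assoc,
          ← _root_.sq, complexQuadraticChar_sq hc, one_mul]

variable {ι : Type*} [Fintype ι] [DecidableEq ι]

theorem sum_addChar_mul_weightedSumSquares (hK : ringChar K ≠ 2) {ψ : AddChar K ℂ}
    (hψ : ψ.IsPrimitive) (w : ι → Kˣ) {a : K} (ha : a ≠ 0) :
    ∑ x : ι → K, ψ (a * QuadraticMap.weightedSumSquares K w x)
      = ∏ i, χ (a * w i) * gaussSum χ ψ := by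
  calc ∑ x : ι → K, ψ (a * QuadraticMap.weightedSumSquares K w x)
      = ∑ x : ι → K, ∏ i, ψ (a * w i * x i ^ 2) := by
        refine sum_congr rfl fun x _ => ?_
        simp only [QuadraticMap.weightedSumSquares_apply, Units.smul_def, smul_eq_mul, mul_sum,
          ψ.map_sum_eq_prod, mul_assoc, _root_.sq]
    _ = ∏ i, χ (a * w i) * gaussSum χ ψ := by
        rw [← Fintype.prod_sum fun i (y : K) => ψ (a * w i * y ^ 2)]
        exact prod_congr rfl fun i _ => sum_addChar_mul_sq hK hψ (mul_ne_zero ha (w i).ne_zero)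

theorem sum_addChar_mul_weightedSumSquares_of_card_eq (hK : ringChar K ≠ 2) {ψ : AddChar K ℂ}
    (hψ : ψ.IsPrimitive) (w : ι → Kˣ) {k : ℕ} (hι : Fintype.card ι = 2 * k) {a : K}
    (ha : a ≠ 0) :
    ∑ x : ι → K, ψ (a * QuadraticMap.weightedSumSquares K w x)
      = χ ((-1) ^ k * ∏ i, (w i : K)) * (Fintype.card K : ℂ) ^ k := by
  have hχa : χ a ^ Fintype.card ι = 1 := by rw [hι, pow_mul, complexQuadraticChar_sq ha, one_pow]
  calc ∑ x : ι → K, ψ (a * QuadraticMap.weightedSumSquares K w x)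
      = χ a ^ Fintype.card ι * (∏ i, χ (w i)) * (gaussSum χ ψ ^ 2) ^ k := by
        rw [sum_addChar_mul_weightedSumSquares hK hψ w ha]
        simp only [map_mul, prod_mul_distrib, prod_const, card_univ, hι, pow_mul]
    _ = χ ((-1) ^ k * ∏ i, (w i : K)) * (Fintype.card K : ℂ) ^ k := by
        rw [hχa, gaussSum_complexQuadraticChar_sq hK hψ, map_mul, map_pow, map_prod]
        ring

theorem card_filter_eq_zero_mul_card {α : Type*} [Fintype α] {ψ : AddChar K ℂ}
    (hψ : ψ.IsPrimitive) (f : α → K) :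
    (#{x | f x = 0} : ℂ) * Fintype.card K = ∑ a : K, ∑ x, ψ (a * f x) := by
  rw [sum_comm]
  simp only [sum_mulShift _ hψ, Nat.cast_ite, Nat.cast_zero, ← sum_filter, sum_const, nsmul_eq_mul]

theorem card_zeros_weightedSumSquares_mul_card (hK : ringChar K ≠ 2) (w : ι → Kˣ) {k : ℕ}
    (hι : Fintype.card ι = 2 * k) :
    (#{x | QuadraticMap.weightedSumSquares K w x = 0} : ℤ) * Fintype.card K
      = (Fintype.card K : ℤ) ^ (2 * k)
        + quadraticChar K ((-1) ^ k * ∏ i, (w i : K)) * (Fintype.card K - 1)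
          * Fintype.card K ^ k := by
  set ψ := FiniteField.primitiveChar_to_Complex K
  have hψ : ψ.IsPrimitive := FiniteField.primitiveChar_to_Complex_isPrimitive K
  apply Int.cast_injective (α := ℂ)
  push_cast
  rw [card_filter_eq_zero_mul_card hψ, Fintype.sum_eq_add_sum_compl 0]
  simp only [zero_mul, map_zero_eq_one, sum_const, card_univ, Fintype.card_fun, hι, nsmul_one]
  rw [sum_congr rfl fun a ha => sum_addChar_mul_weightedSumSquares_of_card_eq hK hψ w hι
    (by simpa using ha), sum_const, card_compl, card_singleton, nsmul_eq_mul,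
    Nat.cast_sub Fintype.card_pos, complexQuadraticChar_apply]
  push_cast
  ring

end GaussSum

namespace QuadraticMap

variable {R M M' N : Type*} [CommRing R] [AddCommGroup M] [Module R M] [AddCommGroup M']
  [Module R M'] [AddCommGroup N] [Module R N]

lemma separatingLeft_associated [Invertible (2 : R)] {Q : QuadraticForm R M}
    (hQ : (polarBilin Q).SeparatingLeft) : (associated (R := R) Q).SeparatingLeft := fun x hx =>
  hQ x fun y => by
    rw [← two_nsmul_associated R Q, LinearMap.smul_apply, LinearMap.smul_apply, hx y, smul_zero]

lemma Equivalent.card_zeros_eq [Fintype M] [Fintype M'] [DecidableEq N]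
    {Q₁ : QuadraticMap R M N} {Q₂ : QuadraticMap R M' N} (h : Q₁.Equivalent Q₂) :
    #{x | Q₁ x = 0} = #{x | Q₂ x = 0} := by
  obtain ⟨e⟩ := h
  exact card_equiv e.toLinearEquiv.toEquiv fun x => by simp [e.map_app]

end QuadraticMap

theorem QuadraticForm.exists_card_zeros_eq {K V : Type*} [Field K] [Fintype K] [DecidableEq K]
    (hK : ringChar K ≠ 2) [AddCommGroup V] [Module K V] [Fintype V] [Nontrivial V]
    (Q : QuadraticForm K V) (hQ : (QuadraticMap.polarBilin Q).SeparatingLeft)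
    (hV : Even (finrank K V)) :
    ∃ ε : ℤ, (ε = 1 ∨ ε = -1) ∧ (#{x | Q x = 0} : ℤ)
      = (Fintype.card K : ℤ) ^ (finrank K V - 1)
        + ε * (Fintype.card K - 1) * (Fintype.card K : ℤ) ^ ((finrank K V - 2) / 2) := by
  have : Invertible (2 : K) := invertibleOfNonzero (Ring.two_ne_zero hK)
  obtain ⟨w, hw⟩ := Q.equivalent_weightedSumSquares_units_of_nondegenerate'
    (QuadraticMap.separatingLeft_associated hQ)
  obtain ⟨k, hk⟩ := hV
  obtain ⟨j, rfl⟩ : ∃ j, k = j + 1 :=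
    Nat.exists_eq_add_one.mpr (by have := finrank_pos (R := K) (M := V); omega)
  refine ⟨_, quadraticChar_dichotomy (a := (-1) ^ (j + 1) * ∏ i, (w i : K))
    (by simp [prod_ne_zero_iff, Units.ne_zero]), ?_⟩
  have hcount := card_zeros_weightedSumSquares_mul_card hK w (k := j + 1) (by simp [hk, two_mul])
  rw [← hw.card_zeros_eq] at hcount
  apply mul_right_cancel₀ (Int.natCast_ne_zero.mpr (Fintype.card_ne_zero (α := K)))
  rw [hcount, show finrank K V - 1 = 2 * j + 1 by omega, show (finrank K V - 2) / 2 = j by omega]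
  ring

theorem stmt_12_general (p m : ℕ) (hp : p.Prime) (hp2 : p ≠ 2) (hme : Even m)
    (F : Type) [Field F] [Fintype F] [DecidableEq F] [Algebra (ZMod p) F]
    (hF : Fintype.card F = p ^ m)
    (Q : QuadraticForm (ZMod p) F)
    (hQ : ∀ y : F, (∀ x : F, QuadraticMap.polar Q x y = 0) → y = 0) :
    ∃ ε : ℤ, (ε = 1 ∨ ε = -1) ∧
      ((Finset.univ.filter (fun x : F => x ≠ 0 ∧ Q x = 0)).card : ℤ)
        = (p : ℤ) ^ (m - 1) + ε * ((p : ℤ) - 1) * (p : ℤ) ^ ((m - 2) / 2) - 1 := by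
  have : Fact p.Prime := ⟨hp⟩
  have hfinrank : finrank (ZMod p) F = m := by
    have h := card_eq_pow_finrank (K := ZMod p) (V := F)
    rw [ZMod.card, hF] at h
    exact (Nat.pow_right_injective hp.two_le h).symm
  obtain ⟨ε, hε, hcount⟩ := Q.exists_card_zeros_eq (by rwa [ZMod.ringChar_zmod_n])
    (fun y hy => hQ y fun x => by rw [QuadraticMap.polar_comm]; exact hy x) (hfinrank ▸ hme)
  rw [ZMod.card, hfinrank] at hcount
  have hnonzero : #{x : F | x ≠ 0 ∧ Q x = 0} + 1 = #{x | Q x = 0} := by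
    rw [← card_erase_add_one (s := {x | Q x = 0}) (mem_filter.mpr ⟨mem_univ 0, Q.map_zero⟩)]
    congr 2
    ext x
    simp
  exact ⟨ε, hε, by omega⟩

theorem stmt_12 (p m : ℕ) (hp : p.Prime) (hp2 : p ≠ 2) (hm : 0 < m) (hme : Even m)
    (F : Type) [Field F] [Fintype F] [DecidableEq F] [Algebra (ZMod p) F]
    (hF : Fintype.card F = p ^ m)
    (Q : QuadraticForm (ZMod p) F)
    (hQ : ∀ y : F, (∀ x : F, QuadraticMap.polar Q x y = 0) → y = 0) :
    ∃ ε : ℤ, (ε = 1 ∨ ε = -1) ∧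
      ((Finset.univ.filter (fun x : F => x ≠ 0 ∧ Q x = 0)).card : ℤ)
        = (p : ℤ) ^ (m - 1) + ε * ((p : ℤ) - 1) * (p : ℤ) ^ ((m - 2) / 2) - 1 :=
  stmt_12_general p m hp hp2 hme F hF Q hQ
end
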